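/- The Krull dimension of A(p) is infinite: for every N ∈ ℕ there exists a chain P_{N+1} ⊊ P_N ⊊ ⋯ ⊊ P₁ of N+1 distinct prime ideals of the ring A(p). -/

import Mathlib

open scoped BigOperators

/-- A weight: a sequence of positive reals. -/
structure GoodWeight : Type where
  p : ℕ → ℝ
  pos : ∀ n, 0 < p n

namespace GoodWeight

/-- The growth condition `lim_{n→∞} p(n)^(1/n) = ∞`. -/
def Grows (w : GoodWeight) : Prop :=
  Filter.Tendsto (fun n : ℕ => w.p n ^ ((n : ℝ)⁻¹)) Filter.atTop Filter.atTop

/-- The Banach algebra `A(p)`, in its sequence model: a sequence `a : ℕ → ℂ` (the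
Taylor coefficients at `0` of the corresponding entire function) such that
`sup_n p(n)|a(n)| < ∞`. -/
def Ap (w : GoodWeight) : Type :=
  {a : ℕ → ℂ // ∃ C : ℝ, ∀ n, w.p n * ‖a n‖ ≤ C}

namespace Ap

variable {w : GoodWeight}

instance : Zero w.Ap :=
  ⟨⟨fun _ => 0, 0, fun n => by simp⟩⟩

instance : Add w.Ap :=
  ⟨fun a b =>
    ⟨fun n => a.1 n + b.1 n, by
      obtain ⟨C, hC⟩ := a.2
      obtain ⟨D, hD⟩ := b.2
      refine ⟨C + D, fun n => ?_⟩
      have h1 : ‖a.1 n + b.1 n‖ ≤ ‖a.1 n‖ + ‖b.1 n‖ :=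
        norm_add_le _ _
      calc w.p n * ‖a.1 n + b.1 n‖
          ≤ w.p n * ‖a.1 n‖ + w.p n * ‖b.1 n‖ := by
            rw [← mul_add]; exact mul_le_mul_of_nonneg_left h1 (w.pos n).le
        _ ≤ C + D := add_le_add (hC n) (hD n)⟩⟩

instance : Neg w.Ap :=
  ⟨fun a =>
    ⟨fun n => -a.1 n, by
      obtain ⟨C, hC⟩ := a.2
      exact ⟨C, fun n => by simpa using hC n⟩⟩⟩

/-- The weighted Hadamard multiplication `(f ∗ g)(n) = p(n) f̂(n) ĝ(n)`. -/
instance : Mul w.Ap :=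
  ⟨fun a b =>
    ⟨fun n => (w.p n : ℂ) * a.1 n * b.1 n, by
      obtain ⟨C, hC⟩ := a.2
      obtain ⟨D, hD⟩ := b.2
      refine ⟨C * D, fun n => ?_⟩
      have e : w.p n * ‖(w.p n : ℂ) * a.1 n * b.1 n‖
          = (w.p n * ‖a.1 n‖) * (w.p n * ‖b.1 n‖) := by
        rw [norm_mul, norm_mul, Complex.norm_real, Real.norm_eq_abs, abs_of_pos (w.pos n)]; ring
      rw [e]
      have h0C : (0:ℝ) ≤ C :=
        le_trans (mul_nonneg (w.pos 0).le (norm_nonneg _)) (hC 0)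
      exact mul_le_mul (hC n) (hD n) (mul_nonneg (w.pos n).le (norm_nonneg _)) h0C⟩⟩

/-- The identity element `ε`, with coefficients `1/p(n)`. -/
noncomputable instance : One w.Ap :=
  ⟨⟨fun n => ((w.p n : ℂ))⁻¹, 1, fun n => by
      rw [norm_inv, Complex.norm_real, Real.norm_eq_abs, abs_of_pos (w.pos n),
        mul_inv_cancel₀ (w.pos n).ne']⟩⟩

instance : SMul ℂ w.Ap :=
  ⟨fun c a =>
    ⟨fun n => c * a.1 n, by
      obtain ⟨C, hC⟩ := a.2
      refine ⟨‖c‖ * C, fun n => ?_⟩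
      rw [norm_mul]
      calc w.p n * (‖c‖ * ‖a.1 n‖)
          = ‖c‖ * (w.p n * ‖a.1 n‖) := by ring
        _ ≤ ‖c‖ * C := mul_le_mul_of_nonneg_left (hC n) (norm_nonneg c)⟩⟩

noncomputable instance : CommRing w.Ap where
  add := (· + ·)
  add_assoc a b c := Subtype.ext (funext fun n => add_assoc _ _ _)
  zero := 0
  zero_add a := Subtype.ext (funext fun n => zero_add _)
  add_zero a := Subtype.ext (funext fun n => add_zero _)
  add_comm a b := Subtype.ext (funext fun n => add_comm _ _)
  nsmul := nsmulRec
  zsmul := zsmulRec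
  mul := (· * ·)
  mul_assoc a b c := Subtype.ext (funext fun n => by
    show (w.p n : ℂ) * ((w.p n : ℂ) * a.1 n * b.1 n) * c.1 n
        = (w.p n : ℂ) * a.1 n * ((w.p n : ℂ) * b.1 n * c.1 n)
    ring)
  one := 1
  one_mul a := Subtype.ext (funext fun n => by
    show (w.p n : ℂ) * ((w.p n : ℂ))⁻¹ * a.1 n = a.1 n
    have h : ((w.p n : ℝ) : ℂ) ≠ 0 := by exact_mod_cast (w.pos n).ne'
    rw [mul_inv_cancel₀ h, one_mul])
  mul_one a := Subtype.ext (funext fun n => by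
    show (w.p n : ℂ) * a.1 n * ((w.p n : ℂ))⁻¹ = a.1 n
    have h : ((w.p n : ℝ) : ℂ) ≠ 0 := by exact_mod_cast (w.pos n).ne'
    field_simp)
  left_distrib a b c := Subtype.ext (funext fun n => by
    show (w.p n : ℂ) * a.1 n * (b.1 n + c.1 n)
        = (w.p n : ℂ) * a.1 n * b.1 n + (w.p n : ℂ) * a.1 n * c.1 n
    ring)
  right_distrib a b c := Subtype.ext (funext fun n => by
    show (w.p n : ℂ) * (a.1 n + b.1 n) * c.1 n
        = (w.p n : ℂ) * a.1 n * c.1 n + (w.p n : ℂ) * b.1 n * c.1 n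
    ring)
  zero_mul a := Subtype.ext (funext fun n => by
    show (w.p n : ℂ) * 0 * a.1 n = 0
    ring)
  mul_zero a := Subtype.ext (funext fun n => by
    show (w.p n : ℂ) * a.1 n * 0 = 0
    ring)
  mul_comm a b := Subtype.ext (funext fun n => by
    show (w.p n : ℂ) * a.1 n * b.1 n = (w.p n : ℂ) * b.1 n * a.1 n
    ring)
  neg := Neg.neg
  neg_add_cancel a := Subtype.ext (funext fun n => neg_add_cancel _)

instance : Module ℂ w.Ap where
  smul := (· • ·)
  one_smul a := Subtype.ext (funext fun n => by
    show (1 : ℂ) * a.1 n = a.1 n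
    ring)
  mul_smul c d a := Subtype.ext (funext fun n => by
    show (c * d) * a.1 n = c * (d * a.1 n)
    ring)
  smul_zero c := Subtype.ext (funext fun n => by
    show c * 0 = 0
    ring)
  smul_add c a b := Subtype.ext (funext fun n => by
    show c * (a.1 n + b.1 n) = c * a.1 n + c * b.1 n
    ring)
  add_smul c d a := Subtype.ext (funext fun n => by
    show (c + d) * a.1 n = c * a.1 n + d * a.1 n
    ring)
  zero_smul a := Subtype.ext (funext fun n => by
    show (0 : ℂ) * a.1 n = 0
    ring)

noncomputable instance : Algebra ℂ w.Ap :=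
  Algebra.ofModule
    (fun c a b => Subtype.ext (funext fun n => by
      show (w.p n : ℂ) * (c * a.1 n) * b.1 n = c * ((w.p n : ℂ) * a.1 n * b.1 n)
      ring))
    (fun c a b => Subtype.ext (funext fun n => by
      show (w.p n : ℂ) * a.1 n * (c * b.1 n) = c * ((w.p n : ℂ) * a.1 n * b.1 n)
      ring))

theorem bddAbove (a : w.Ap) :
    BddAbove (Set.range fun n => w.p n * ‖a.1 n‖) := by
  obtain ⟨C, hC⟩ := a.2
  exact ⟨C, by rintro x ⟨k, rfl⟩; exact hC k⟩

/-- The norm `‖f‖ = sup_n p(n) |f̂(n)|`, as an `AddGroupNorm`. -/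
noncomputable def gnorm (w : GoodWeight) : AddGroupNorm w.Ap where
  toFun a := ⨆ n, w.p n * ‖a.1 n‖
  map_zero' := by
    have h : ∀ n : ℕ, w.p n * ‖(0 : w.Ap).1 n‖ = 0 := fun n => by
      show w.p n * ‖0‖ = 0; simp
    simp [h]
  add_le' a b := by
    apply ciSup_le
    intro n
    have h1 : ‖a.1 n + b.1 n‖ ≤ ‖a.1 n‖ + ‖b.1 n‖ :=
      norm_add_le _ _
    calc w.p n * ‖(a + b).1 n‖
        ≤ w.p n * ‖a.1 n‖ + w.p n * ‖b.1 n‖ := by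
          rw [← mul_add]; exact mul_le_mul_of_nonneg_left h1 (w.pos n).le
      _ ≤ (⨆ k, w.p k * ‖a.1 k‖) + ⨆ k, w.p k * ‖b.1 k‖ :=
          add_le_add (le_ciSup (bddAbove a) n) (le_ciSup (bddAbove b) n)
  neg' a := by
    have h : (fun n => w.p n * ‖(-a).1 n‖)
        = fun n => w.p n * ‖a.1 n‖ := by
      funext n
      show w.p n * ‖-a.1 n‖ = w.p n * ‖a.1 n‖
      rw [norm_neg]
    show (⨆ n, w.p n * ‖(-a).1 n‖) = ⨆ n, w.p n * ‖a.1 n‖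
    rw [h]
  eq_zero_of_map_eq_zero' a h := by
    apply Subtype.ext
    funext n
    have h1 : w.p n * ‖a.1 n‖ ≤ 0 := h ▸ le_ciSup (bddAbove a) n
    have h2 : (0:ℝ) ≤ w.p n * ‖a.1 n‖ :=
      mul_nonneg (w.pos n).le (norm_nonneg _)
    have h3 : ‖a.1 n‖ = 0 := by
      rcases mul_eq_zero.mp (le_antisymm h1 h2) with h' | h'
      · exact absurd h' (w.pos n).ne'
      · exact h'
    exact norm_eq_zero.mp h3

noncomputable instance : NormedAddCommGroup w.Ap :=
  (gnorm w).toNormedAddCommGroup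

theorem norm_def (a : w.Ap) : ‖a‖ = ⨆ n, w.p n * ‖a.1 n‖ := rfl

theorem le_norm (a : w.Ap) (n : ℕ) : w.p n * ‖a.1 n‖ ≤ ‖a‖ :=
  le_ciSup (bddAbove a) n

theorem norm_nonneg' (a : w.Ap) : 0 ≤ ‖a‖ :=
  le_trans (mul_nonneg (w.pos 0).le (norm_nonneg _)) (le_norm a 0)

noncomputable instance : NormedCommRing w.Ap :=
  { (inferInstance : NormedAddCommGroup w.Ap), (inferInstance : CommRing w.Ap) with
    norm_mul_le := by
      intro a b
      apply ciSup_le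
      intro n
      have e : w.p n * ‖(a * b).1 n‖
          = (w.p n * ‖a.1 n‖) * (w.p n * ‖b.1 n‖) := by
        show w.p n * ‖(w.p n : ℂ) * a.1 n * b.1 n‖ = _
        rw [norm_mul, norm_mul, Complex.norm_real, Real.norm_eq_abs, abs_of_pos (w.pos n)]; ring
      rw [e]
      exact mul_le_mul (le_norm a n) (le_norm b n)
        (mul_nonneg (w.pos n).le (norm_nonneg _)) (norm_nonneg' a) }

noncomputable instance : NormedSpace ℂ w.Ap where
  norm_smul_le c a := by
    apply ciSup_le
    intro n
    have e : w.p n * ‖(c • a).1 n‖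
        = ‖c‖ * (w.p n * ‖a.1 n‖) := by
      show w.p n * ‖c * a.1 n‖ = _
      rw [norm_mul]; ring
    rw [e]
    calc ‖c‖ * (w.p n * ‖a.1 n‖)
        ≤ ‖c‖ * ‖a‖ := mul_le_mul_of_nonneg_left (le_norm a n) (norm_nonneg c)
      _ = ‖c‖ * ‖a‖ := rfl

noncomputable instance : NormedAlgebra ℂ w.Ap :=
  { (inferInstance : Algebra ℂ w.Ap) with
    norm_smul_le := fun c a => norm_smul_le c a }

end Ap

end GoodWeight

/-!
Multiplying coefficients by `p(n)` turns `A(p)` into the algebra of bounded sequences with the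
pointwise product, so each `a ↦ p(n)|â(n)|` is a multiplicative seminorm, uniformly bounded
in `n`.
Fix a free ultrafilter `𝒰` on `ℕ`. For a scale `t(n) → 0`, the elements `a` with
`p(n)|â(n)| = O(t(n)^m)` along `𝒰` for every `m` form an ideal, and it is prime because along an
ultrafilter the failure of `p(n)|â(n)| = O(t(n)^m)` means that `t(n)^m = o(p(n)|â(n)|)`.
The scales `t_k(n) = exp(-n^(k+1))` give a strictly decreasing sequence of such prime ideals:
the element with `p(n)|â(n)| = t_{k+1}(n)` lies in the ideal of `t_k` but not in that of `t_{k+1}`.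
-/

open Filter Asymptotics Topology

theorem Asymptotics.isLittleO_of_not_isBigO {α E F : Type*} [Norm E] [Norm F] {U : Ultrafilter α}
    {f : α → E} {g : α → F} (h : ¬f =O[U] g) : g =o[U] f := by
  refine IsLittleO.of_bound fun c hc => ?_
  have hnot : ∀ᶠ x in U, ¬‖f x‖ ≤ c⁻¹ * ‖g x‖ :=
    Ultrafilter.eventually_not.mpr fun h' => h (IsBigO.of_bound _ h')
  filter_upwards [hnot] with x hx
  rw [not_le, inv_mul_lt_iff₀ hc] at hx
  exact hx.le

section RapidDecay

variable {R ι : Type*} [CommRing R] {v : ι → MulRingSeminorm R} {U : Filter ι}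

def rapidDecayIdeal (v : ι → MulRingSeminorm R) (U : Filter ι)
    (hv : ∀ a, (fun i => v i a) =O[U] fun _ => (1 : ℝ)) (t : ι → ℝ) : Ideal R where
  carrier := {a | ∀ m : ℕ, (fun i => v i a) =O[U] fun i => t i ^ m}
  zero_mem' _ := by simpa only [map_zero] using isBigO_zero _ _
  add_mem' {a b} ha hb m :=
    (isBigO_of_le _ fun i => by
      simp only [Real.norm_of_nonneg (apply_nonneg _ _),
        Real.norm_of_nonneg (add_nonneg (apply_nonneg (v i) a) (apply_nonneg (v i) b))]
      exact map_add_le_add (v i) a b).trans ((ha m).add (hb m))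
  smul_mem' c a ha m := by
    simpa only [smul_eq_mul, map_mul, one_mul] using (hv c).mul (ha m)

variable {hv : ∀ a, (fun i => v i a) =O[U] fun _ => (1 : ℝ)} {t s : ι → ℝ}

@[simp]
theorem mem_rapidDecayIdeal {a : R} :
    a ∈ rapidDecayIdeal v U hv t ↔ ∀ m : ℕ, (fun i => v i a) =O[U] fun i => t i ^ m :=
  Iff.rfl

theorem rapidDecayIdeal_le_of_isBigO (h : t =O[U] s) :
    rapidDecayIdeal v U hv t ≤ rapidDecayIdeal v U hv s :=
  fun _ ha m => (ha m).trans (h.pow m)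

theorem notMem_rapidDecayIdeal_of_isBigO [U.NeBot] (ht : Tendsto t U (𝓝 0))
    (ht0 : ∀ᶠ i in U, t i ≠ 0) {x : R} (hx : t =O[U] fun i => v i x) :
    x ∉ rapidDecayIdeal v U hv t := by
  intro hmem
  -- `t = O(v x) = O(t ^ 2)`, while `t ^ 2 = o(t)` because `t → 0`.
  have hsq : (fun i => t i ^ 2) =o[U] t := by
    simpa only [pow_two, one_mul] using (isLittleO_one_iff (F := ℝ)).mpr ht |>.mul_isBigO
      (isBigO_refl t U)
  exact isLittleO_irrefl ht0.frequently (hx.trans (hmem 2) |>.trans_isLittleO hsq)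

theorem rapidDecayIdeal_isPrime {U : Ultrafilter ι}
    {hv : ∀ a, (fun i => v i a) =O[U] fun _ => (1 : ℝ)}
    (ht : Tendsto t U (𝓝 0)) (ht0 : ∀ᶠ i in U, t i ≠ 0) :
    (rapidDecayIdeal v U hv t).IsPrime := by
  refine ⟨(Ideal.ne_top_iff_one _).mpr <| notMem_rapidDecayIdeal_of_isBigO ht ht0 ?_,
    fun {a b} hab => ?_⟩
  · simpa only [map_one] using ((isLittleO_one_iff ℝ).mpr ht).isBigO
  by_contra! hnot
  obtain ⟨⟨ma, hma⟩, ⟨mb, hmb⟩⟩ : (∃ m, _) ∧ (∃ m, _) := by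
    simpa only [mem_rapidDecayIdeal, not_forall] using hnot
  have hprod : (fun i => v i a * v i b) =O[U] fun i => t i ^ ma * t i ^ mb := by
    simpa only [map_mul, pow_add] using hab (ma + mb)
  have hlittle :=
    ((isLittleO_of_not_isBigO hma).mul (isLittleO_of_not_isBigO hmb)).trans_isBigO hprod
  refine isLittleO_irrefl ?_ hlittle
  exact (ht0.mono fun i hi => mul_ne_zero (pow_ne_zero ma hi) (pow_ne_zero mb hi)).frequently

end RapidDecay

namespace GoodWeight.Ap

variable {w : GoodWeight}

theorem weight_mul_norm_div (z : ℂ) (n : ℕ) : w.p n * ‖z / w.p n‖ = ‖z‖ := by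
  rw [norm_div, Complex.norm_real, Real.norm_of_nonneg (w.pos n).le,
    mul_div_cancel₀ _ (w.pos n).ne']

variable (w) in
noncomputable def coeffSeminorm (n : ℕ) : MulRingSeminorm w.Ap where
  toFun a := w.p n * ‖a.1 n‖
  map_zero' := by
    change w.p n * ‖(0 : ℂ)‖ = 0
    rw [norm_zero, mul_zero]
  add_le' a b := by
    rw [← mul_add]
    exact mul_le_mul_of_nonneg_left (norm_add_le (a.1 n) (b.1 n)) (w.pos n).le
  neg' a := congrArg (w.p n * ·) (norm_neg (a.1 n))
  map_one' := by
    change w.p n * ‖((w.p n : ℂ))⁻¹‖ = 1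
    rw [inv_eq_one_div, weight_mul_norm_div, norm_one]
  map_mul' a b := by
    change w.p n * ‖(w.p n : ℂ) * a.1 n * b.1 n‖ = _
    rw [norm_mul, norm_mul, Complex.norm_real, Real.norm_of_nonneg (w.pos n).le]
    ring

theorem isBigO_coeffSeminorm_one (l : Filter ℕ) (a : w.Ap) :
    (fun n => coeffSeminorm w n a) =O[l] fun _ => (1 : ℝ) := by
  obtain ⟨C, hC⟩ := a.2
  refine IsBigO.of_bound C (Eventually.of_forall fun n => ?_)
  rw [norm_one, mul_one, Real.norm_of_nonneg (apply_nonneg _ _)]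
  exact hC n

noncomputable def ofWeighted (s : ℕ → ℂ) (hs : ∃ C, ∀ n, ‖s n‖ ≤ C) : w.Ap :=
  ⟨fun n => s n / w.p n, hs.imp fun _ hC n => (weight_mul_norm_div (s n) n).trans_le (hC n)⟩

@[simp]
theorem coeffSeminorm_ofWeighted (s : ℕ → ℂ) (hs : ∃ C, ∀ n, ‖s n‖ ≤ C) (n : ℕ) :
    coeffSeminorm w n (ofWeighted s hs) = ‖s n‖ :=
  weight_mul_norm_div (s n) n

end GoodWeight.Ap

noncomputable def expScale (k n : ℕ) : ℝ :=
  Real.exp (-(n : ℝ) ^ (k + 1))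

theorem expScale_pos (k n : ℕ) : 0 < expScale k n :=
  Real.exp_pos _

theorem tendsto_expScale (k : ℕ) : Tendsto (expScale k) atTop (𝓝 0) :=
  Real.tendsto_exp_atBot.comp <| tendsto_neg_atTop_atBot.comp <|
    (tendsto_pow_atTop k.succ_ne_zero).comp tendsto_natCast_atTop_atTop

theorem expScale_succ_isBigO_pow (k m : ℕ) :
    expScale (k + 1) =O[atTop] fun n => expScale k n ^ m := by
  refine IsBigO.of_bound' ((eventually_ge_atTop m).mono fun n hn => ?_)
  rw [Real.norm_of_nonneg (expScale_pos _ _).le,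
    Real.norm_of_nonneg (pow_nonneg (expScale_pos _ _).le _), expScale, expScale,
    ← Real.exp_nat_mul, Real.exp_le_exp, mul_neg, neg_le_neg_iff, pow_succ' _ (k + 1)]
  exact mul_le_mul_of_nonneg_right (Nat.cast_le.mpr hn) (by positivity)

namespace GoodWeight.Ap

variable (w : GoodWeight)

noncomputable def expDecayIdeal (k : ℕ) : Ideal w.Ap :=
  rapidDecayIdeal (coeffSeminorm w) (hyperfilter ℕ) (isBigO_coeffSeminorm_one _) (expScale k)

theorem expDecayIdeal_isPrime (k : ℕ) : (expDecayIdeal w k).IsPrime :=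
  rapidDecayIdeal_isPrime ((tendsto_expScale k).mono_left Nat.hyperfilter_le_atTop)
    (.of_forall fun n => (expScale_pos k n).ne')

theorem strictAnti_expDecayIdeal : StrictAnti (expDecayIdeal w) := by
  refine strictAnti_nat_of_succ_lt fun k => SetLike.lt_iff_le_and_exists.mpr ⟨?_, ?_⟩
  · exact rapidDecayIdeal_le_of_isBigO <| by
      simpa only [pow_one] using (expScale_succ_isBigO_pow k 1).mono Nat.hyperfilter_le_atTop
  let x : w.Ap := ofWeighted (fun n => (expScale (k + 1) n : ℂ))
    ⟨1, fun n => by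
      rw [Complex.norm_real, Real.norm_of_nonneg (expScale_pos _ _).le]
      exact Real.exp_le_one_iff.mpr (neg_nonpos.mpr (by positivity))⟩
  have hx : (fun n => coeffSeminorm w n x) = expScale (k + 1) := funext fun n => by
    rw [coeffSeminorm_ofWeighted, Complex.norm_real, Real.norm_of_nonneg (expScale_pos _ _).le]
  refine ⟨x, fun m => ?_, ?_⟩
  · rw [hx]
    exact (expScale_succ_isBigO_pow k m).mono Nat.hyperfilter_le_atTop
  · exact notMem_rapidDecayIdeal_of_isBigO
      ((tendsto_expScale _).mono_left Nat.hyperfilter_le_atTop)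
      (.of_forall fun n => (expScale_pos _ n).ne') (hx ▸ isBigO_refl _ _)

end GoodWeight.Ap

theorem krullDimensionInfinite_general (w : GoodWeight) (N : ℕ) :
    ∃ P : Fin (N + 1) → Ideal w.Ap, StrictMono P ∧ ∀ i, (P i).IsPrime :=
  ⟨fun i => GoodWeight.Ap.expDecayIdeal w (N - i), fun i j hij =>
    GoodWeight.Ap.strictAnti_expDecayIdeal w (by omega),
    fun i => GoodWeight.Ap.expDecayIdeal_isPrime w _⟩

/-- The Krull dimension of `A(p)` is infinite: for every `N` there is a
strictly increasing chain of `N + 1` distinct prime ideals of `A(p)`. -/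
theorem krullDimensionInfinite (w : GoodWeight) (hg : w.Grows) (N : ℕ) :
    ∃ P : Fin (N + 1) → Ideal w.Ap, StrictMono P ∧ ∀ i, (P i).IsPrime :=
  krullDimensionInfinite_general w N
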